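/- For every nonempty finite set S of integers there exists f ∈ S such that the number of distinct values among {ν₂(f − g) : g ∈ S, g ≠ f} is at most log₂ |S|. -/

import Mathlib

/-!
Strong induction on `|S|`. If `|S| ≥ 2`, fix `a ∈ S` and let `k` be the least valuation of `g - a`,
`g ≠ a`. Then `S` splits by the residue of `x - a` modulo `p ^ (k + 1)` into two nonempty parts,
and every difference across the parts has valuation exactly `k`. Picking `f` for the smaller
part `A` by induction, `f` sees at most one valuation more in `S` than in `A`, while `2 |A| ≤ |S|`;
so the number of valuations seen from `f` is at most `log₂ |S|`.
-/

def padicValDiffs (p : ℕ) (S : Finset ℤ) (f : ℤ) : Finset ℕ :=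
  (S.erase f).image fun g => padicValInt p (f - g)

lemma padicValInt_sub_comm (p : ℕ) (x y : ℤ) : padicValInt p (x - y) = padicValInt p (y - x) := by
  rw [padicValInt, padicValInt, ← Int.natAbs_neg, neg_sub]

section

variable {p : ℕ}

lemma card_padicValDiffs_le_succ {A S : Finset ℤ} {f : ℤ} {k : ℕ}
    (hk : ∀ g ∈ S \ A, padicValInt p (f - g) = k) :
    (padicValDiffs p S f).card ≤ (padicValDiffs p A f).card + 1 := by
  refine (Finset.card_le_card (s := padicValDiffs p S f) ?_).trans (Finset.card_insert_le k _)
  intro v hv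
  obtain ⟨g, hg, rfl⟩ := Finset.mem_image.mp hv
  obtain ⟨hgf, hgS⟩ := Finset.mem_erase.mp hg
  by_cases hgA : g ∈ A
  · exact Finset.mem_insert_of_mem (Finset.mem_image_of_mem _ (Finset.mem_erase.mpr ⟨hgf, hgA⟩))
  · rw [hk g (Finset.mem_sdiff.mpr ⟨hgS, hgA⟩)]
    exact Finset.mem_insert_self k _

variable [Fact p.Prime]

lemma padicValInt_sub_eq_of_dvd_of_not_dvd {x y a : ℤ} {k : ℕ}
    (hx : (p : ℤ) ^ (k + 1) ∣ x - a) (hy : (p : ℤ) ^ k ∣ y - a)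
    (hy' : ¬ (p : ℤ) ^ (k + 1) ∣ y - a) : padicValInt p (x - y) = k := by
  have hdvd : (p : ℤ) ^ k ∣ x - y := by
    rw [show x - y = (x - a) - (y - a) by ring]
    exact dvd_sub ((pow_dvd_pow _ k.le_succ).trans hx) hy
  have hndvd : ¬ (p : ℤ) ^ (k + 1) ∣ x - y := fun h =>
    hy' (by simpa using dvd_sub hx h)
  have hne : x - y ≠ 0 := fun h => hndvd (h ▸ dvd_zero _)
  rw [padicValInt_dvd_iff] at hdvd hndvd
  push Not at hndvd
  exact le_antisymm (Nat.lt_succ_iff.mp hndvd.2) (hdvd.resolve_left hne)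

lemma exists_half_subset_padicValInt_sub_eq {S : Finset ℤ} (hS : S.Nontrivial) :
    ∃ A ⊆ S, A.Nonempty ∧ 2 * A.card ≤ S.card ∧
      ∃ k : ℕ, ∀ f ∈ A, ∀ g ∈ S \ A, padicValInt p (f - g) = k := by
  obtain ⟨a, ha⟩ := hS.nonempty
  obtain ⟨b, hb, hmin⟩ := (S.erase a).exists_min_image (fun g => padicValInt p (g - a))
    ((Finset.erase_nonempty ha).mpr hS)
  set k := padicValInt p (b - a)
  have hdvd : ∀ x ∈ S, (p : ℤ) ^ k ∣ x - a := by
    intro x hx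
    rcases eq_or_ne x a with rfl | hxa
    · simp
    · exact (padicValInt_dvd_iff _ _).mpr (Or.inr (hmin x (Finset.mem_erase.mpr ⟨hxa, hx⟩)))
  have hb' : ¬ (p : ℤ) ^ (k + 1) ∣ b - a := by
    rw [padicValInt_dvd_iff]
    push Not
    exact ⟨sub_ne_zero.mpr (Finset.ne_of_mem_erase hb), k.lt_succ_self⟩
  set B := S.filter fun x => (p : ℤ) ^ (k + 1) ∣ x - a
  have hBS : B ⊆ S := Finset.filter_subset _ _
  have hcross : ∀ x ∈ B, ∀ y ∈ S \ B, padicValInt p (x - y) = k := by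
    intro x hx y hy
    obtain ⟨hyS, hyB⟩ := Finset.mem_sdiff.mp hy
    exact padicValInt_sub_eq_of_dvd_of_not_dvd (Finset.mem_filter.mp hx).2 (hdvd y hyS)
      fun h => hyB (Finset.mem_filter.mpr ⟨hyS, h⟩)
  have hsplit := Finset.card_sdiff_add_card_eq_card hBS
  by_cases hBcard : 2 * B.card ≤ S.card
  · exact ⟨B, hBS, ⟨a, Finset.mem_filter.mpr ⟨ha, by simp⟩⟩, hBcard, k, hcross⟩
  · refine ⟨S \ B, Finset.sdiff_subset, ⟨b, Finset.mem_sdiff.mpr ⟨Finset.mem_of_mem_erase hb,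
      fun h => hb' (Finset.mem_filter.mp h).2⟩⟩, by omega, k, ?_⟩
    intro f hf g hg
    rw [Finset.sdiff_sdiff_eq_self hBS] at hg
    rw [padicValInt_sub_comm]
    exact hcross g hg f hf

theorem exists_two_pow_card_padicValDiffs_le (S : Finset ℤ) (hS : S.Nonempty) :
    ∃ f ∈ S, 2 ^ (padicValDiffs p S f).card ≤ S.card := by
  induction S using Finset.strongInduction with
  | H S ih =>
    obtain ⟨a, rfl⟩ | hS := hS.exists_eq_singleton_or_nontrivial
    · exact ⟨a, Finset.mem_singleton_self a, by simp [padicValDiffs]⟩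
    obtain ⟨A, hAS, hA, hcard, k, hk⟩ := exists_half_subset_padicValInt_sub_eq (p := p) hS
    have hAS' : A ⊂ S :=
      Finset.ssubset_iff_subset_ne.mpr ⟨hAS, fun h => by subst h; have := hA.card_pos; omega⟩
    obtain ⟨f, hf, hbound⟩ := ih A hAS' hA
    refine ⟨f, hAS hf, ?_⟩
    calc 2 ^ (padicValDiffs p S f).card
        ≤ 2 ^ ((padicValDiffs p A f).card + 1) :=
          Nat.pow_le_pow_right two_pos (card_padicValDiffs_le_succ (hk f hf))
      _ = 2 * 2 ^ (padicValDiffs p A f).card := by ring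
      _ ≤ S.card := by omega

end

theorem stmt4 (S : Finset ℤ) (hS : S.Nonempty) :
    ∃ f ∈ S,
      ((((S.erase f).image (fun g => padicValInt 2 (f - g))).card : ℝ))
        ≤ Real.logb 2 (S.card : ℝ) := by
  obtain ⟨f, hf, hbound⟩ := exists_two_pow_card_padicValDiffs_le (p := 2) S hS
  refine ⟨f, hf, ?_⟩
  rw [Real.le_logb_iff_rpow_le one_lt_two (by exact_mod_cast hS.card_pos), Real.rpow_natCast]
  exact_mod_cast hbound
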